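/- arXiv:1306.4518 — 4 statements merged into one kernel-verified Lean document; each statement's English description precedes it below -/
import Mathlib

section
/- There is exactly one family of complex structure constants Λ^s_{ab} (a,b,s ∈ {0,1,2,3}) satisfying: (i) Λ^s_{ij} = Λ^s_{ji} for all s ∈ {0,1,2,3} and all i,j ∈ {1,2,3}; (ii) Λ^s_{i0} − Λ^s_{0i} = λ if s = i and = 0 otherwise, for all i ∈ {1,2,3} and s ∈ {0,1,2,3}; (iii) (centrality of the metric) η_q·Λ^p_{qr} + η_p·Λ^q_{pr} = 0 for all p,q,r ∈ {0,1,2,3}. The unique solution is Λ^0_{ii} = −λc² and Λ^i_{0i} = −λ for each i ∈ {1,2,3}, with all other components equal to zero. -/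
/-!
The conditions are affine in `Λ`, so the difference of two solutions solves the homogeneous
system (`lam = 0`). There, (i) and (ii) make `Λ^s_{ab}` symmetric in `a, b`, while (iii) makes
`Λ^p_{qr} / η_p` antisymmetric in `p, q`. A tensor antisymmetric in its first two slots and
symmetric in its last two vanishes, so the solution is unique, and `lamSol` is one.
-/

/-- Minkowski metric diagonal coefficients: `η 0 = c²`, `η i = -1` for `i ∈ {1,2,3}`. -/
noncomputable def minkEta (c : ℝ) : Fin 4 → ℂ :=
  fun a => if a = 0 then (c : ℂ)^2 else -1

/-- The explicit solution: `Λ⁰ᵢᵢ = -λc²`, `Λⁱ₀ᵢ = -λ` for `i ∈ {1,2,3}`, all else zero. -/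
noncomputable def lamSol (c : ℝ) (lam : ℂ) : Fin 4 → Fin 4 → Fin 4 → ℂ :=
  fun s a b =>
    if s = 0 ∧ a = b ∧ a ≠ 0 then -lam * (c : ℂ)^2
    else if a = 0 ∧ b = s ∧ s ≠ 0 then -lam
    else 0

/-- The structure-constant conditions (i), (ii), (iii). -/
def lamConds (c : ℝ) (lam : ℂ) (Λ : Fin 4 → Fin 4 → Fin 4 → ℂ) : Prop :=
  (∀ s : Fin 4, ∀ i ∈ ({1,2,3} : Finset (Fin 4)), ∀ j ∈ ({1,2,3} : Finset (Fin 4)),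
      Λ s i j = Λ s j i) ∧
  (∀ i ∈ ({1,2,3} : Finset (Fin 4)), ∀ s : Fin 4,
      Λ s i 0 - Λ s 0 i = if s = i then lam else 0) ∧
  (∀ p q r : Fin 4, minkEta c q * Λ p q r + minkEta c p * Λ q p r = 0)

theorem eq_zero_of_antisymm_of_symm {ι G : Type*} [AddGroup G] [IsAddTorsionFree G]
    {T : ι → ι → ι → G} (antisymm : ∀ a b c, T a b c = -T b a c)
    (symm : ∀ a b c, T a b c = T a c b) : T = 0 := by
  funext a b c
  refine self_eq_neg.mp ?_
  calc T a b c = -T b a c := antisymm a b c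
    _ = -T b c a := by rw [symm]
    _ = T c b a := by rw [antisymm, neg_neg]
    _ = T c a b := symm c b a
    _ = -T a c b := antisymm c a b
    _ = -T a b c := by rw [symm a b c]

theorem minkEta_ne_zero {c : ℝ} (hc : c ≠ 0) (a : Fin 4) : minkEta c a ≠ 0 := by
  unfold minkEta
  split_ifs
  · exact pow_ne_zero 2 (Complex.ofReal_ne_zero.mpr hc)
  · exact neg_ne_zero.mpr one_ne_zero

theorem mem_spatial_of_ne_zero {i : Fin 4} (hi : i ≠ 0) : i ∈ ({1, 2, 3} : Finset (Fin 4)) := by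
  fin_cases i <;> simp_all

theorem lamConds_lamSol (c : ℝ) (lam : ℂ) : lamConds c lam (lamSol c lam) := by
  refine ⟨?_, ?_, ?_⟩
  · intro s i hi j hj
    fin_cases s <;> fin_cases hi <;> fin_cases hj <;> simp [lamSol]
  · intro i hi s
    fin_cases hi <;> fin_cases s <;> simp [lamSol]
  · intro p q r
    fin_cases p <;> fin_cases q <;> fin_cases r <;> simp [lamSol, minkEta] <;> ring

theorem lamConds.sub {c : ℝ} {lam : ℂ} {Λ Λ' : Fin 4 → Fin 4 → Fin 4 → ℂ}
    (h : lamConds c lam Λ) (h' : lamConds c lam Λ') : lamConds c 0 (Λ - Λ') := by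
  obtain ⟨h₁, h₂, h₃⟩ := h
  obtain ⟨h₁', h₂', h₃'⟩ := h'
  refine ⟨fun s i hi j hj => ?_, fun i hi s => ?_, fun p q r => ?_⟩
  · simp only [Pi.sub_apply, h₁ s i hi j hj, h₁' s i hi j hj]
  · simp only [Pi.sub_apply, ite_self]
    linear_combination h₂ i hi s - h₂' i hi s
  · simp only [Pi.sub_apply]
    linear_combination h₃ p q r - h₃' p q r

theorem lamConds.symm_of_lam_zero {c : ℝ} {Λ : Fin 4 → Fin 4 → Fin 4 → ℂ}
    (h : lamConds c 0 Λ) (s a b : Fin 4) : Λ s a b = Λ s b a := by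
  obtain ⟨h₁, h₂, -⟩ := h
  have mixed : ∀ i, i ≠ 0 → Λ s i 0 = Λ s 0 i := fun i hi =>
    sub_eq_zero.mp ((h₂ i (mem_spatial_of_ne_zero hi) s).trans (ite_self 0))
  rcases eq_or_ne a 0 with rfl | ha <;> rcases eq_or_ne b 0 with rfl | hb
  · rfl
  · exact (mixed b hb).symm
  · exact mixed a ha
  · exact h₁ s a (mem_spatial_of_ne_zero ha) b (mem_spatial_of_ne_zero hb)

theorem lamConds.eq_zero_of_lam_zero {c : ℝ} (hc : c ≠ 0) {Λ : Fin 4 → Fin 4 → Fin 4 → ℂ}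
    (h : lamConds c 0 Λ) : Λ = 0 := by
  have hη := minkEta_ne_zero hc
  set T : Fin 4 → Fin 4 → Fin 4 → ℂ := fun p q r => Λ p q r / minkEta c p
  have antisymm : ∀ p q r, T p q r = -T q p r := fun p q r => by
    rw [eq_neg_iff_add_eq_zero, div_add_div _ _ (hη p) (hη q), div_eq_zero_iff]
    exact Or.inl (by linear_combination h.2.2 p q r)
  have symm : ∀ p q r, T p q r = T p r q := fun p q r => by
    simp only [T, h.symm_of_lam_zero p q r]
  have hT := eq_zero_of_antisymm_of_symm antisymm symm
  funext p q r
  simpa [T, hη p] using congrFun (congrFun (congrFun hT p) q) r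

theorem unique_central_calculus (c : ℝ) (hc : 0 < c) (lam : ℂ) :
    lamConds c lam (lamSol c lam) ∧
      ∀ Λ : Fin 4 → Fin 4 → Fin 4 → ℂ, lamConds c lam Λ → Λ = lamSol c lam :=
  ⟨lamConds_lamSol c lam, fun _ h =>
    sub_eq_zero.mp ((h.sub (lamConds_lamSol c lam)).eq_zero_of_lam_zero hc.ne')⟩
end

section
/- The plane wave ψ(t,x) = exp(i(ωt + α₁x₁ + α₂x₂ + α₃x₃)) satisfies the deformed Klein–Gordon equation (1/c²)∂²ψ/∂t² + λΣ_{i=1}^{3}∂³ψ/∂t∂x_i² − Σ_{i=1}^{3}∂²ψ/∂x_i² = −(m²c²/ħ²)ψ at every point of ℝ × ℝ³ if and only if the dispersion relation ω² − m²c⁴/ħ² = c²|α|²(1 − iλω) holds. -/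
/-!
Each partial derivative of the plane wave multiplies it by `i` times the matching frequency, so the
deformed Klein–Gordon operator acts on `ψ` as multiplication by the symbol
`|α|²(1 - iλω) - ω²/c²`. As `ψ` never vanishes, the equation holds everywhere iff the symbol equals
`-m²c²/ħ²`, which after multiplication by `-c²` is the dispersion relation.
-/

open Complex

/-- The plane wave `ψ(t,x) = exp(i(ωt + α₁x₁ + α₂x₂ + α₃x₃))`. -/
noncomputable def planeWave (ω : ℝ) (α : Fin 3 → ℝ) (t : ℝ) (x : Fin 3 → ℝ) : ℂ :=
  Complex.exp (Complex.I * ((ω : ℂ) * (t : ℂ) + ∑ i, (α i : ℂ) * (x i : ℂ)))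

theorem hasDerivAt_cexp_mul_add (A B : ℂ) (t : ℝ) :
    HasDerivAt (fun s : ℝ => cexp (A * s + B)) (A * cexp (A * t + B)) t := by
  simpa [mul_comm] using (((hasDerivAt_id (t : ℂ)).comp_ofReal.const_mul A).add_const B).cexp

theorem iteratedDeriv_cexp_mul_add (n : ℕ) (A B : ℂ) :
    iteratedDeriv n (fun s : ℝ => cexp (A * s + B)) = fun t : ℝ => A ^ n * cexp (A * t + B) := by
  induction n with
  | zero => simp
  | succ n ih =>
    rw [iteratedDeriv_succ, ih]
    funext t
    rw [((hasDerivAt_cexp_mul_add A B t).const_mul (A ^ n)).deriv, pow_succ, mul_assoc]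

theorem sum_mul_update {ι R : Type*} [Fintype ι] [DecidableEq ι] [CommRing R]
    (a x : ι → R) (i : ι) (h : R) :
    ∑ j, a j * Function.update x i h j = ∑ j, a j * x j + a i * (h - x i) := by
  have hsplit (j : ι) :
      a j * Function.update x i h j = a j * x j + (Pi.single i (a i * (h - x i)) : ι → R) j := by
    rcases eq_or_ne j i with rfl | hj
    · simp only [Function.update_self, Pi.single_eq_same]; ring
    · simp [hj]
  simp only [hsplit, Finset.sum_add_distrib, Finset.sum_pi_single']
  simp

section

variable (ω : ℝ) (α : Fin 3 → ℝ)

theorem planeWave_ne_zero (t : ℝ) (x : Fin 3 → ℝ) : planeWave ω α t x ≠ 0 :=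
  exp_ne_zero _

theorem planeWave_eq_cexp_time (t : ℝ) (x : Fin 3 → ℝ) :
    planeWave ω α t x = cexp (I * ω * t + I * ∑ j, (α j : ℂ) * x j) := by
  rw [planeWave, mul_add, mul_assoc]

theorem planeWave_update_eq_cexp (t : ℝ) (x : Fin 3 → ℝ) (i : Fin 3) (h : ℝ) :
    planeWave ω α t (Function.update x i h)
      = cexp (I * α i * h + I * (ω * t + ∑ j, (α j : ℂ) * x j - α i * x i)) := by
  have hsum := congrArg (fun r : ℝ => (r : ℂ)) (sum_mul_update α x i h)
  push_cast at hsum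
  rw [planeWave, hsum]
  ring_nf

theorem iteratedDeriv_planeWave_time (n : ℕ) (t : ℝ) (x : Fin 3 → ℝ) :
    iteratedDeriv n (fun s => planeWave ω α s x) t = (I * ω) ^ n * planeWave ω α t x := by
  simp only [planeWave_eq_cexp_time, iteratedDeriv_cexp_mul_add]

theorem iteratedDeriv_planeWave_update (n : ℕ) (t : ℝ) (x : Fin 3 → ℝ) (i : Fin 3) (h : ℝ) :
    iteratedDeriv n (fun h' => planeWave ω α t (Function.update x i h')) h
      = (I * α i) ^ n * planeWave ω α t (Function.update x i h) := by
  simp only [planeWave_update_eq_cexp, iteratedDeriv_cexp_mul_add]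

theorem iteratedDeriv_planeWave_coord (n : ℕ) (t : ℝ) (x : Fin 3 → ℝ) (i : Fin 3) :
    iteratedDeriv n (fun h => planeWave ω α t (Function.update x i h)) (x i)
      = (I * α i) ^ n * planeWave ω α t x := by
  rw [iteratedDeriv_planeWave_update, Function.update_eq_self]

theorem deriv_iteratedDeriv_planeWave_coord (n : ℕ) (t : ℝ) (x : Fin 3 → ℝ) (i : Fin 3) :
    deriv (fun s => iteratedDeriv n (fun h => planeWave ω α s (Function.update x i h)) (x i)) t
      = (I * α i) ^ n * (I * ω) * planeWave ω α t x := by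
  simp only [iteratedDeriv_planeWave_coord]
  rw [deriv_const_mul_field, ← iteratedDeriv_one, iteratedDeriv_planeWave_time, pow_one]
  ring

end

theorem deformedKG_planeWave (c : ℝ) (lam : ℂ) (ω : ℝ) (α : Fin 3 → ℝ) (t : ℝ) (x : Fin 3 → ℝ) :
    (1 / (c : ℂ)^2) * iteratedDeriv 2 (fun s => planeWave ω α s x) t
        + lam * ∑ i : Fin 3,
            deriv (fun s =>
              iteratedDeriv 2 (fun h => planeWave ω α s (Function.update x i h)) (x i)) t
        - ∑ i : Fin 3,
            iteratedDeriv 2 (fun h => planeWave ω α t (Function.update x i h)) (x i)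
      = ((∑ i : Fin 3, (α i : ℂ) ^ 2) * (1 - I * lam * ω) - (ω : ℂ) ^ 2 / (c : ℂ) ^ 2)
          * planeWave ω α t x := by
  simp only [deriv_iteratedDeriv_planeWave_coord]
  simp only [iteratedDeriv_planeWave_time, iteratedDeriv_planeWave_coord, ← Finset.sum_mul,
    mul_pow, I_sq, neg_one_mul, Finset.sum_neg_distrib]
  ring

theorem planeWave_deformed_KG_iff_dispersion_general
    (c hbar m : ℝ) (hc : 0 < c) (lam : ℂ)
    (ω : ℝ) (α : Fin 3 → ℝ) :
    (∀ (t : ℝ) (x : Fin 3 → ℝ),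
      (1 / (c : ℂ)^2) * iteratedDeriv 2 (fun s => planeWave ω α s x) t
        + lam * ∑ i : Fin 3,
            deriv (fun s =>
              iteratedDeriv 2 (fun h => planeWave ω α s (Function.update x i h)) (x i)) t
        - ∑ i : Fin 3,
            iteratedDeriv 2 (fun h => planeWave ω α t (Function.update x i h)) (x i)
      = -((m : ℂ)^2 * (c : ℂ)^2 / (hbar : ℂ)^2) * planeWave ω α t x)
    ↔ ((ω : ℂ)^2 - (m : ℂ)^2 * (c : ℂ)^4 / (hbar : ℂ)^2
        = (c : ℂ)^2 * ((∑ i : Fin 3, (α i : ℂ)^2)) * (1 - Complex.I * lam * (ω : ℂ))) := by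
  simp only [deformedKG_planeWave, mul_left_inj' (planeWave_ne_zero _ _ _ _), forall_const]
  have hc0 : (c : ℂ) ≠ 0 := ofReal_ne_zero.mpr hc.ne'
  constructor <;> intro h <;> field_simp at h ⊢ <;> linear_combination -h

theorem planeWave_deformed_KG_iff_dispersion
    (c hbar m : ℝ) (hc : 0 < c) (hbar_pos : 0 < hbar) (hm : 0 ≤ m) (lam : ℂ)
    (ω : ℝ) (α : Fin 3 → ℝ) :
    (∀ (t : ℝ) (x : Fin 3 → ℝ),
      (1 / (c : ℂ)^2) * iteratedDeriv 2 (fun s => planeWave ω α s x) t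
        + lam * ∑ i : Fin 3,
            deriv (fun s =>
              iteratedDeriv 2 (fun h => planeWave ω α s (Function.update x i h)) (x i)) t
        - ∑ i : Fin 3,
            iteratedDeriv 2 (fun h => planeWave ω α t (Function.update x i h)) (x i)
      = -((m : ℂ)^2 * (c : ℂ)^2 / (hbar : ℂ)^2) * planeWave ω α t x)
    ↔ ((ω : ℂ)^2 - (m : ℂ)^2 * (c : ℂ)^4 / (hbar : ℂ)^2
        = (c : ℂ)^2 * ((∑ i : Fin 3, (α i : ℂ)^2)) * (1 - Complex.I * lam * (ω : ℂ))) :=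
  planeWave_deformed_KG_iff_dispersion_general c hbar m hc lam ω α
end

section
/- Let ω, μ, b, K be real numbers with b ≥ 0, K ≥ 0 and b·|μ| < 1. If ω² − b² = K(1 + μω), then |ω| ≥ b. -/
/-! Below the mass shell, `|ω| < b`, the smallness condition gives `|μ ω| < b |μ| < 1`, so the
right-hand side `K (1 + μ ω)` is nonnegative while the left-hand side `ω² - b²` is negative. -/

theorem one_add_mul_pos_of_abs_le {ω μ b : ℝ} (hω : |ω| ≤ b) (hsmall : b * |μ| < 1) :
    0 < 1 + μ * ω := by
  have hμω : |μ * ω| < 1 := calc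
    |μ * ω| = |μ| * |ω| := abs_mul μ ω
    _ ≤ b * |μ| := by rw [mul_comm b]; exact mul_le_mul_of_nonneg_left hω (abs_nonneg μ)
    _ < 1 := hsmall
  linarith [neg_abs_le (μ * ω)]

theorem dispersion_omega_lower_bound_general (ω μ b K : ℝ)
    (hK : 0 ≤ K) (hsmall : b * |μ| < 1)
    (hdisp : ω^2 - b^2 = K * (1 + μ * ω)) :
    b ≤ |ω| := by
  by_contra! hω
  have hlhs : ω ^ 2 - b ^ 2 < 0 := by
    rw [sub_neg, ← sq_abs ω]
    exact pow_lt_pow_left₀ hω (abs_nonneg ω) two_ne_zero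
  have hrhs : 0 ≤ K * (1 + μ * ω) :=
    mul_nonneg hK (one_add_mul_pos_of_abs_le hω.le hsmall).le
  linarith

theorem dispersion_omega_lower_bound (ω μ b K : ℝ)
    (hb : 0 ≤ b) (hK : 0 ≤ K) (hsmall : b * |μ| < 1)
    (hdisp : ω^2 - b^2 = K * (1 + μ * ω)) :
    b ≤ |ω| :=
  dispersion_omega_lower_bound_general ω μ b K hK hsmall hdisp
end

section
/- Let a be a real number and f(x) = x/(1 + ax). Then (f(m) + f(n) − f(m+n))/(m·n) tends to 2a as (m,n) → (0,0) with m ≠ 0 and n ≠ 0. That is, to lowest order in the masses, m' + n' − (m+n)' = 2amn, which with a = iλc²/ħ is the paper's binding-energy term 2iλmnc²/ħ. -/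
/-!
Over a common denominator, with f(x) = x / (1 + ax),
  f(m) + f(n) - f(m + n) = m n (2a + a²(m + n)) / ((1 + am)(1 + an)(1 + a(m + n))).
After cancelling m n the right-hand side is continuous at (0, 0), where it equals 2a.
-/

open Filter Topology

theorem div_one_add_mul_add_div_one_add_mul_sub {K : Type*} [Field K] {a m n : K}
    (hm : 1 + a * m ≠ 0) (hn : 1 + a * n ≠ 0) (hmn : 1 + a * (m + n) ≠ 0) :
    m / (1 + a * m) + n / (1 + a * n) - (m + n) / (1 + a * (m + n)) =
      m * n * ((2 * a + a ^ 2 * (m + n)) /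
        ((1 + a * m) * (1 + a * n) * (1 + a * (m + n)))) := by
  rw [div_add_div _ _ hm hn, div_sub_div _ _ (mul_ne_zero hm hn) hmn, mul_div_assoc']
  congr 1
  ring

theorem eventually_one_add_mul_ne_zero (a : ℝ) :
    ∀ᶠ p : ℝ × ℝ in 𝓝 (0, 0), (1 + a * p.1) * (1 + a * p.2) * (1 + a * (p.1 + p.2)) ≠ 0 :=
  ContinuousAt.eventually_ne (by fun_prop) (by norm_num)

theorem tendsto_mass_defect_quotient (a : ℝ) :
    Tendsto (fun p : ℝ × ℝ => (2 * a + a ^ 2 * (p.1 + p.2)) /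
        ((1 + a * p.1) * (1 + a * p.2) * (1 + a * (p.1 + p.2))))
      (𝓝 (0, 0)) (𝓝 (2 * a)) := by
  have hcont : ContinuousAt (fun p : ℝ × ℝ => (2 * a + a ^ 2 * (p.1 + p.2)) /
      ((1 + a * p.1) * (1 + a * p.2) * (1 + a * (p.1 + p.2)))) (0, 0) :=
    ContinuousAt.div (by fun_prop) (by fun_prop) (by norm_num)
  simpa using hcont.tendsto

theorem effective_mass_defect_lowest_order (a : ℝ) :
    Tendsto
      (fun p : ℝ × ℝ =>
        (p.1 / (1 + a * p.1) + p.2 / (1 + a * p.2)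
            - (p.1 + p.2) / (1 + a * (p.1 + p.2))) / (p.1 * p.2))
      (nhdsWithin (0, 0) {p : ℝ × ℝ | p.1 ≠ 0 ∧ p.2 ≠ 0})
      (nhds (2 * a)) := by
  refine (tendsto_mass_defect_quotient a).mono_left nhdsWithin_le_nhds |>.congr' ?_
  filter_upwards [nhdsWithin_le_nhds (eventually_one_add_mul_ne_zero a), self_mem_nhdsWithin]
    with p hden ⟨hp₁, hp₂⟩
  obtain ⟨h₁h₂, h₁₂⟩ := mul_ne_zero_iff.mp hden
  obtain ⟨h₁, h₂⟩ := mul_ne_zero_iff.mp h₁h₂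
  rw [div_one_add_mul_add_div_one_add_mul_sub h₁ h₂ h₁₂,
    mul_div_cancel_left₀ _ (mul_ne_zero hp₁ hp₂)]
end
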